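/- The function H(d) = ∫_{arccosh(d)}^{∞} d/√(cosh²u − d²) du, defined for d > 1, is nonincreasing in d. -/

import Mathlib

/-!
The substitution `s = d / cosh u` turns `H d` into the complete elliptic integral of the first
kind `K(1/d) = ∫₀¹ ds / (√(1 - s²) √(1 - s²/d²))`. Its integrand increases pointwise with the
modulus `k = 1/d`, and for `k < 1` it is dominated by `(1 - k²)^(-1/2) (1 - s²)^(-1/2)`, the
derivative of `arcsin` up to a constant, so `K` is monotone on `[0, 1)`.
-/

open MeasureTheory Set Real

noncomputable def arccosh (x : ℝ) : ℝ := Real.log (x + Real.sqrt (x ^ 2 - 1))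

noncomputable def H (d : ℝ) : ℝ :=
  ∫ u in Set.Ioi (arccosh d), d / Real.sqrt (Real.cosh u ^ 2 - d ^ 2)

noncomputable def ellipticK (k : ℝ) : ℝ :=
  ∫ s in Ioo 0 1, (√(1 - s ^ 2) * √(1 - (k * s) ^ 2))⁻¹

lemma integrableOn_inv_sqrt_one_sub_sq :
    IntegrableOn (fun s : ℝ => (√(1 - s ^ 2))⁻¹) (Ioo 0 1) := by
  refine (intervalIntegral.integrableOn_deriv_of_nonneg continuous_arcsin.continuousOn
    (fun s hs => ?_) (fun s _ => by positivity)).mono_set Ioo_subset_Ioc_self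
  simpa only [one_div] using hasDerivAt_arcsin (by linarith [hs.1]) hs.2.ne

lemma ellipticK_integrand_le {k s : ℝ} (hk : k ^ 2 < 1) (hs : s ^ 2 ≤ 1) :
    (√(1 - s ^ 2) * √(1 - (k * s) ^ 2))⁻¹ ≤ (√(1 - k ^ 2))⁻¹ * (√(1 - s ^ 2))⁻¹ := by
  rw [mul_comm, mul_inv]
  refine mul_le_mul_of_nonneg_right (inv_anti₀ (sqrt_pos.2 (sub_pos.2 hk)) ?_) (by positivity)
  exact sqrt_le_sqrt (by rw [mul_pow]; nlinarith [sq_nonneg k])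

lemma integrableOn_ellipticK_integrand {k : ℝ} (hk : k ^ 2 < 1) :
    IntegrableOn (fun s => (√(1 - s ^ 2) * √(1 - (k * s) ^ 2))⁻¹) (Ioo 0 1) := by
  refine (integrableOn_inv_sqrt_one_sub_sq.const_mul (√(1 - k ^ 2))⁻¹).mono' ?_ ?_
  · exact (by fun_prop : Measurable fun s : ℝ =>
      (√(1 - s ^ 2) * √(1 - (k * s) ^ 2))⁻¹).aestronglyMeasurable
  · refine (ae_restrict_iff' measurableSet_Ioo).2 (ae_of_all _ fun s hs => ?_)
    rw [norm_of_nonneg (by positivity)]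
    exact ellipticK_integrand_le hk (by nlinarith [hs.1, hs.2])

lemma ellipticK_monotoneOn : MonotoneOn ellipticK (Ico 0 1) := by
  have hsq {k : ℝ} (hk : k ∈ Ico (0 : ℝ) 1) : k ^ 2 < 1 := by nlinarith [hk.1, hk.2]
  intro k₁ hk₁ k₂ hk₂ hk
  refine setIntegral_mono_on (integrableOn_ellipticK_integrand (hsq hk₁))
    (integrableOn_ellipticK_integrand (hsq hk₂)) measurableSet_Ioo fun s hs => ?_
  have hs2 : s ^ 2 < 1 := by nlinarith [hs.1, hs.2]
  have hk₂s : (k₂ * s) ^ 2 < 1 := by rw [mul_pow]; nlinarith [hsq hk₂, sq_nonneg k₂]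
  gcongr
  exacts [mul_nonneg hk₁.1 hs.1.le, hs.1.le]

lemma lt_cosh_of_arcosh_lt {d u : ℝ} (hd : 1 ≤ d) (hu : arcosh d < u) : d < cosh u := by
  have h0 := arcosh_nonneg hd
  rw [← cosh_arcosh hd]
  exact cosh_strictMonoOn h0 (h0.trans hu.le) hu

lemma image_div_cosh_Ioi_arcosh {d : ℝ} (hd : 1 ≤ d) :
    (fun u => d / cosh u) '' Ioi (arcosh d) = Ioo 0 1 := by
  have hd0 : 0 < d := by linarith
  ext s
  constructor
  · rintro ⟨u, hu, rfl⟩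
    exact ⟨by positivity, (div_lt_one (cosh_pos u)).2 (lt_cosh_of_arcosh_lt hd hu)⟩
  · rintro ⟨hs0, hs1⟩
    have hds : d < d / s := (lt_div_iff₀ hs0).2 (by nlinarith)
    refine ⟨arcosh (d / s), (arcosh_lt_arcosh hd0 (by positivity)).2 hds, ?_⟩
    simp only [cosh_arcosh (hd.trans hds.le)]
    field_simp

lemma injOn_div_cosh_Ioi_arcosh {d : ℝ} (hd : 1 ≤ d) :
    InjOn (fun u => d / cosh u) (Ioi (arcosh d)) := by
  intro a ha b hb hab
  have h0 := arcosh_nonneg hd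
  refine cosh_injOn (mem_Ici.2 (h0.trans (le_of_lt ha))) (mem_Ici.2 (h0.trans (le_of_lt hb))) ?_
  rw [div_eq_div_iff (cosh_pos a).ne' (cosh_pos b).ne'] at hab
  exact (mul_left_cancel₀ (by linarith) hab).symm

-- `arccosh` is definitionally Mathlib's `Real.arcosh`, so the lemmas above apply to `H`.
lemma H_eq_ellipticK {d : ℝ} (hd : 1 < d) : H d = ellipticK d⁻¹ := by
  have hderiv (u : ℝ) :
      HasDerivAt (fun u => d / cosh u) ((0 * cosh u - d * sinh u) / cosh u ^ 2) u :=
    (hasDerivAt_const u d).div (hasDerivAt_cosh u) (cosh_pos u).ne'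
  rw [ellipticK, ← image_div_cosh_Ioi_arcosh hd.le,
    integral_image_eq_integral_abs_deriv_smul measurableSet_Ioi
      (fun u _ => (hderiv u).hasDerivWithinAt) (injOn_div_cosh_Ioi_arcosh hd.le), H]
  refine setIntegral_congr_fun measurableSet_Ioi fun u (hu : arcosh d < u) => ?_
  have hc := cosh_pos u
  have hdc := lt_cosh_of_arcosh_lt hd.le hu
  have hsinh : 0 < sinh u := sinh_pos_iff.2 ((arcosh_pos hd).trans hu)
  have hsqrt₁ : √(1 - (d / cosh u) ^ 2) = √(cosh u ^ 2 - d ^ 2) / cosh u := by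
    rw [← sqrt_sq hc.le, ← sqrt_div' _ (sq_nonneg _), sqrt_sq hc.le]
    congr 1; field_simp
  have hsqrt₂ : √(1 - (d⁻¹ * (d / cosh u)) ^ 2) = sinh u / cosh u := by
    rw [← sqrt_sq (by positivity : 0 ≤ sinh u / cosh u)]
    congr 1; field_simp; linarith [cosh_sq' u]
  have hsqrt_pos : 0 < √(cosh u ^ 2 - d ^ 2) := sqrt_pos.2 (by nlinarith)
  rw [smul_eq_mul, hsqrt₁, hsqrt₂, abs_of_neg (by field_simp; nlinarith)]
  field_simp
  ring

theorem stmt_1 : AntitoneOn H (Set.Ioi (1 : ℝ)) := by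
  intro d₁ (hd₁ : 1 < d₁) d₂ (hd₂ : 1 < d₂) hd
  rw [H_eq_ellipticK hd₁, H_eq_ellipticK hd₂]
  exact ellipticK_monotoneOn ⟨by positivity, inv_lt_one_of_one_lt₀ hd₂⟩
    ⟨by positivity, inv_lt_one_of_one_lt₀ hd₁⟩ (inv_anti₀ (by linarith) hd)
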